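/- arXiv:2512.01154 — 3 statements merged into one kernel-verified Lean document; each statement's English description precedes it below -/
import Mathlib

section
/- Let θ : [0,1] → [0,+∞] satisfy: θ is continuous, θ is non-increasing, θ(x) = +∞ if and only if x = 0, and θ(x) > θ(1) for each x ∈ [0,1). Let ϑ : [0,+∞] → [−∞,+∞] satisfy: (a) ϑ is continuous and non-increasing on [2θ(1),+∞]; (b) for x ∈ [2θ(1),+∞], ϑ(x) = 0 if and only if x = +∞; (c) for x ∈ [2θ(1),+∞], ϑ(x) = 1 if and only if x = 2θ(1). Then the bivariate function O_{θ,ϑ} : [0,1]² → [0,1] given by O_{θ,ϑ}(x,y) = ϑ(θ(x)+θ(y)) is an overlap function. -/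
/- The sum `θ x + θ y` reaches its two extreme values on `[0,1]²` exactly in the boundary cases of
the overlap axioms: it is `+∞` iff `xy = 0`, and, since `θ` is antitone with `θ 1` finite and
attained only at `1`, it equals its minimum `2 θ(1)` iff `x = y = 1`. The conditions on `ϑ` carry
these to the values `0` and `1`; monotonicity and continuity pass through the composition. -/

open Set Filter Topology
open scoped ENNReal

noncomputable section

/-- `O`, viewed as a function on `[0,1]²` with values in `[0,1] ⊆ [-∞,+∞]`,
is an overlap function: bounded in `[0,1]`, commutative, `O(x,y)=0 ↔ xy=0`,
`O(x,y)=1 ↔ xy=1`, non-decreasing in each variable, and continuous. -/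
def IsOverlapFn (O : ℝ → ℝ → EReal) : Prop :=
  (∀ x ∈ Icc (0:ℝ) 1, ∀ y ∈ Icc (0:ℝ) 1, O x y ∈ Icc (0:EReal) 1) ∧
  (∀ x ∈ Icc (0:ℝ) 1, ∀ y ∈ Icc (0:ℝ) 1, O x y = O y x) ∧
  (∀ x ∈ Icc (0:ℝ) 1, ∀ y ∈ Icc (0:ℝ) 1, (O x y = 0 ↔ x * y = 0)) ∧
  (∀ x ∈ Icc (0:ℝ) 1, ∀ y ∈ Icc (0:ℝ) 1, (O x y = 1 ↔ x * y = 1)) ∧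
  (∀ y ∈ Icc (0:ℝ) 1, ∀ x₁ ∈ Icc (0:ℝ) 1, ∀ x₂ ∈ Icc (0:ℝ) 1, x₁ ≤ x₂ → O x₁ y ≤ O x₂ y) ∧
  (∀ x ∈ Icc (0:ℝ) 1, ∀ y₁ ∈ Icc (0:ℝ) 1, ∀ y₂ ∈ Icc (0:ℝ) 1, y₁ ≤ y₂ → O x y₁ ≤ O x y₂) ∧
  ContinuousOn (fun p : ℝ × ℝ => O p.1 p.2) (Icc (0:ℝ) 1 ×ˢ Icc (0:ℝ) 1)

/-- Both one-sided limits `θ(x⁻)` and `θ(x⁺)` (taken within the domain `[0,1]`)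
exist for every `x ∈ [0,1]`. -/
def HasOneSidedLimits (θ : ℝ → ℝ≥0∞) : Prop :=
  ∀ x ∈ Icc (0:ℝ) 1,
    (∃ l : ℝ≥0∞, Tendsto θ (𝓝[Icc (0:ℝ) 1 ∩ Iio x] x) (𝓝 l)) ∧
    (∃ l : ℝ≥0∞, Tendsto θ (𝓝[Icc (0:ℝ) 1 ∩ Ioi x] x) (𝓝 l))

theorem mul_eq_one_iff_of_mem_Icc {x y : ℝ} (hx : x ∈ Icc (0:ℝ) 1) (hy : y ∈ Icc (0:ℝ) 1) :
    x * y = 1 ↔ x = 1 ∧ y = 1 := by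
  constructor
  · intro h
    constructor <;> nlinarith [hx.1, hx.2, hy.1, hy.2]
  · rintro ⟨rfl, rfl⟩
    exact mul_one 1

theorem ENNReal.add_eq_two_mul_iff_of_le {a b c : ℝ≥0∞} (hc : c ≠ ⊤) (ha : c ≤ a) (hb : c ≤ b) :
    a + b = 2 * c ↔ a = c ∧ b = c := by
  rw [two_mul]
  constructor
  · intro h
    refine ⟨(ha.eq_or_lt.resolve_right fun hca => ?_).symm,
      (hb.eq_or_lt.resolve_right fun hcb => ?_).symm⟩
    · exact (ENNReal.add_lt_add_of_lt_of_le hc hca hb).ne' h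
    · exact (ENNReal.add_lt_add_of_le_of_lt hc ha hcb).ne' h
  · rintro ⟨rfl, rfl⟩
    rfl

theorem mem_Icc_of_antitoneOn_Ici {ϑ : ℝ≥0∞ → EReal} {c z : ℝ≥0∞} (hϑa : AntitoneOn ϑ (Ici c))
    (hϑtop : ϑ ⊤ = 0) (hϑc : ϑ c = 1) (hz : c ≤ z) : ϑ z ∈ Icc (0:EReal) 1 :=
  ⟨hϑtop ▸ hϑa hz (le_top : c ≤ ⊤) le_top, hϑc ▸ hϑa (le_refl c) hz hz⟩

section Generator

variable {θ : ℝ → ℝ≥0∞} {x y : ℝ}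

theorem two_mul_le_add_of_antitoneOn (hθa : AntitoneOn θ (Icc (0:ℝ) 1))
    (hx : x ∈ Icc (0:ℝ) 1) (hy : y ∈ Icc (0:ℝ) 1) : 2 * θ 1 ≤ θ x + θ y := by
  have h1 : (1:ℝ) ∈ Icc (0:ℝ) 1 := right_mem_Icc.2 zero_le_one
  rw [two_mul]
  exact add_le_add (hθa hx h1 hx.2) (hθa hy h1 hy.2)

theorem eq_one_of_apply_eq_apply_one (hθ1 : ∀ x ∈ Ico (0:ℝ) 1, θ 1 < θ x)
    (hx : x ∈ Icc (0:ℝ) 1) (h : θ x = θ 1) : x = 1 :=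
  hx.2.eq_or_lt.resolve_right fun hlt => (hθ1 x ⟨hx.1, hlt⟩).ne' h

theorem add_eq_two_mul_apply_one_iff (hθa : AntitoneOn θ (Icc (0:ℝ) 1)) (hθ1top : θ 1 ≠ ⊤)
    (hθ1 : ∀ x ∈ Ico (0:ℝ) 1, θ 1 < θ x) (hx : x ∈ Icc (0:ℝ) 1) (hy : y ∈ Icc (0:ℝ) 1) :
    θ x + θ y = 2 * θ 1 ↔ x * y = 1 := by
  have h1 : (1:ℝ) ∈ Icc (0:ℝ) 1 := right_mem_Icc.2 zero_le_one
  rw [ENNReal.add_eq_two_mul_iff_of_le hθ1top (hθa hx h1 hx.2) (hθa hy h1 hy.2),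
    mul_eq_one_iff_of_mem_Icc hx hy]
  constructor
  · rintro ⟨hx1, hy1⟩
    exact ⟨eq_one_of_apply_eq_apply_one hθ1 hx hx1, eq_one_of_apply_eq_apply_one hθ1 hy hy1⟩
  · rintro ⟨rfl, rfl⟩
    exact ⟨rfl, rfl⟩

end Generator

/-- If `θ` is continuous, non-increasing, `θ(x)=+∞ ↔ x=0`, `θ(x) > θ(1)` on `[0,1)`,
and `ϑ` is continuous and non-increasing on `[2θ(1),+∞]` with `ϑ(x)=0 ↔ x=+∞` and
`ϑ(x)=1 ↔ x=2θ(1)` there, then `O_{θ,ϑ}(x,y)=ϑ(θ(x)+θ(y))` is an overlap function. -/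
theorem stmt_6 (θ : ℝ → ℝ≥0∞) (ϑ : ℝ≥0∞ → EReal)
    (hθc : ContinuousOn θ (Icc (0:ℝ) 1))
    (hθa : AntitoneOn θ (Icc (0:ℝ) 1))
    (hθtop : ∀ x ∈ Icc (0:ℝ) 1, (θ x = ⊤ ↔ x = 0))
    (hθ1 : ∀ x ∈ Ico (0:ℝ) 1, θ 1 < θ x)
    (hϑc : ContinuousOn ϑ (Ici (2 * θ 1)))
    (hϑa : AntitoneOn ϑ (Ici (2 * θ 1)))
    (hϑ0 : ∀ x ∈ Ici (2 * θ 1), (ϑ x = 0 ↔ x = ⊤))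
    (hϑ1 : ∀ x ∈ Ici (2 * θ 1), (ϑ x = 1 ↔ x = 2 * θ 1)) :
    IsOverlapFn (fun x y => ϑ (θ x + θ y)) := by
  have h1 : (1:ℝ) ∈ Icc (0:ℝ) 1 := right_mem_Icc.2 zero_le_one
  have hθ1top : θ 1 ≠ ⊤ := fun h => one_ne_zero ((hθtop 1 h1).1 h)
  have hsum : ∀ x ∈ Icc (0:ℝ) 1, ∀ y ∈ Icc (0:ℝ) 1, θ x + θ y ∈ Ici (2 * θ 1) :=
    fun x hx y hy => two_mul_le_add_of_antitoneOn hθa hx hy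
  have hϑtop : ϑ ⊤ = 0 := (hϑ0 ⊤ (mem_Ici.2 le_top)).2 rfl
  have hϑbase : ϑ (2 * θ 1) = 1 := (hϑ1 _ self_mem_Ici).2 rfl
  refine ⟨fun x hx y hy => mem_Icc_of_antitoneOn_Ici hϑa hϑtop hϑbase (hsum x hx y hy),
    fun x _ y _ => congrArg ϑ (add_comm _ _), fun x hx y hy => ?_, fun x hx y hy => ?_,
    fun y hy x₁ hx₁ x₂ hx₂ hle => ?_, fun x hx y₁ hy₁ y₂ hy₂ hle => ?_, ?_⟩
  · rw [hϑ0 _ (hsum x hx y hy), ENNReal.add_eq_top, hθtop x hx, hθtop y hy, mul_eq_zero]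
  · rw [hϑ1 _ (hsum x hx y hy), add_eq_two_mul_apply_one_iff hθa hθ1top hθ1 hx hy]
  · exact hϑa (hsum x₂ hx₂ y hy) (hsum x₁ hx₁ y hy) (add_le_add_left (hθa hx₁ hx₂ hle) _)
  · exact hϑa (hsum x hx y₂ hy₂) (hsum x hx y₁ hy₁) (add_le_add_right (hθa hy₁ hy₂ hle) _)
  · refine hϑc.comp ?_ fun p hp => hsum p.1 hp.1 p.2 hp.2
    exact (hθc.comp continuousOn_fst fun p hp => hp.1).add
      (hθc.comp continuousOn_snd fun p hp => hp.2)
end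
end

section
/- Let θ : [0,1] → [0,+∞] be a function such that the one-sided limits θ(x⁻) and θ(x⁺) exist for every x ∈ [0,1], and let ϑ : [0,+∞] → [−∞,+∞] be a function such that (θ,ϑ) is an additive generator pair of the overlap function O_{θ,ϑ}(x,y) = ϑ(θ(x)+θ(y)). Let k,b ∈ ℝ with k ≠ 0, let h be the extended-real affine function h(x) = kx + b, and let g be defined by g(x) = (x − 2b)/k. Then (h∘θ, ϑ∘g) is also an additive generator pair of O_{θ,ϑ}, i.e., ϑ(g(h(θ(x)) + h(θ(y)))) = ϑ(θ(x)+θ(y)) for all x,y ∈ [0,1]. -/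
open Set Filter Topology
open scoped ENNReal

noncomputable section

/-! The only pitfall in `[-∞,+∞]` is `+∞ + (-∞)`, which cannot arise since `θ` is
`[0,+∞]`-valued: `k u + k v = k (u + v)` for `u, v ≥ 0`, so `g (h u + h v) = u + v` and the
generated function is literally unchanged. -/

lemma EReal.add_coe_add_add_coe_sub (x y : EReal) (b : ℝ) :
    x + b + (y + b) - ((2 * b : ℝ) : EReal) = x + y := by
  rw [add_add_add_comm, ← EReal.coe_add, ← two_mul, EReal.add_sub_cancel_right]

lemma EReal.coe_mul_div_coe_cancel {k : ℝ} (hk : k ≠ 0) (w : EReal) :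
    (k : EReal) * w / k = w := by
  rw [EReal.div_eq_iff (EReal.coe_ne_bot k) (EReal.coe_ne_top k) (EReal.coe_ne_zero.2 hk),
    mul_comm]

lemma affine_add_affine_sub_div {k : ℝ} (hk : k ≠ 0) (b : ℝ) (u v : ℝ≥0∞) :
    ((k : EReal) * u + b + ((k : EReal) * v + b) - ((2 * b : ℝ) : EReal)) / (k : EReal)
      = ((u + v : ℝ≥0∞) : EReal) := by
  rw [EReal.add_coe_add_add_coe_sub,
    ← EReal.left_distrib_of_nonneg (EReal.coe_ennreal_nonneg u) (EReal.coe_ennreal_nonneg v),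
    EReal.coe_mul_div_coe_cancel hk, EReal.coe_ennreal_add]

theorem stmt_7_general (θ : ℝ → ℝ≥0∞) (ϑ : ℝ≥0∞ → EReal)
    (k b : ℝ) (hk : k ≠ 0)
    (h : ℝ≥0∞ → EReal) (hh : ∀ u : ℝ≥0∞, h u = (k : EReal) * (u : EReal) + (b : EReal))
    (g : EReal → ℝ≥0∞)
    (hg : ∀ z ∈ image2 (· + ·) ((fun x => h (θ x)) '' Icc (0:ℝ) 1)
            ((fun x => h (θ x)) '' Icc (0:ℝ) 1),
          (g z : EReal) = (z - ((2 * b : ℝ) : EReal)) / (k : EReal)) :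
    ∀ x ∈ Icc (0:ℝ) 1, ∀ y ∈ Icc (0:ℝ) 1,
      ϑ (g (h (θ x) + h (θ y))) = ϑ (θ x + θ y) := by
  intro x hx y hy
  have hgxy := hg _ (mem_image2_of_mem (mem_image_of_mem _ hx) (mem_image_of_mem _ hy))
  rw [hh, hh, affine_add_affine_sub_div hk] at hgxy
  rw [hh, hh, EReal.coe_ennreal_injective hgxy]

/-- If `(θ,ϑ)` is an additive generator pair of the overlap function
`O_{θ,ϑ}(x,y)=ϑ(θ(x)+θ(y))`, `h(x)=kx+b` (`k ≠ 0`, extended-real affine) and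
`g(x)=(x-2b)/k` on `Ran(h∘θ)+Ran(h∘θ)`, then `(h∘θ, ϑ∘g)` is also an additive
generator pair of `O_{θ,ϑ}`. -/
theorem stmt_7 (θ : ℝ → ℝ≥0∞) (ϑ : ℝ≥0∞ → EReal)
    (hθ : HasOneSidedLimits θ)
    (hO : IsOverlapFn (fun x y => ϑ (θ x + θ y)))
    (k b : ℝ) (hk : k ≠ 0)
    (h : ℝ≥0∞ → EReal) (hh : ∀ u : ℝ≥0∞, h u = (k : EReal) * (u : EReal) + (b : EReal))
    (g : EReal → ℝ≥0∞)
    (hg : ∀ z ∈ image2 (· + ·) ((fun x => h (θ x)) '' Icc (0:ℝ) 1)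
            ((fun x => h (θ x)) '' Icc (0:ℝ) 1),
          (g z : EReal) = (z - ((2 * b : ℝ) : EReal)) / (k : EReal)) :
    ∀ x ∈ Icc (0:ℝ) 1, ∀ y ∈ Icc (0:ℝ) 1,
      ϑ (g (h (θ x) + h (θ y))) = ϑ (θ x + θ y) :=
  stmt_7_general θ ϑ k b hk h hh g hg
end
end

section
/- Let h : [0,+∞] → [−∞,+∞] be continuous and non-decreasing, with h(u) = +∞ if and only if u = +∞ (so h(0) ∈ ℝ), and suppose h is injective on [0,+∞). Let g : [2h(0),+∞] → [0,+∞] be a function satisfying u + v = g(h(u) + h(v)) for all u,v ∈ [0,+∞]. Then there exist constants k > 0 and b ∈ ℝ such that h(x) = kx + b for all x ∈ [0,+∞] (with k·(+∞)+b = +∞), and consequently g(x) = (x − 2b)/k for all x ∈ [2h(0),+∞]. -/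
/-!
For finite `x, y` the intermediate value theorem gives `z` with `h z` halfway between `h x` and
`h y`; applying `g` to `h x + h y = h z + h z` yields `x + y = z + z`. Hence `h` satisfies
Jensen's equation on `[0, ∞)`, so `h - h 0` is additive there, and a continuous additive function
on `ℝ≥0` is linear since it is determined by its values at nonnegative rationals. Monotonicity and
injectivity make the slope positive, and the formula for `g` follows by solving `h u + h 0 = x`.
-/

open Set
open scoped ENNReal NNReal

theorem NNReal.denseRange_nnratCast : DenseRange ((↑) : ℚ≥0 → ℝ≥0) := by
  refine dense_of_exists_between fun a b hab => ?_
  obtain ⟨q, haq, hqb⟩ := exists_rat_btwn (NNReal.coe_lt_coe.2 hab)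
  have hcoe : ((q.toNNRat : ℝ≥0) : ℝ) = q := by
    change ((q.toNNRat : ℚ≥0) : ℝ) = q
    rw [← Rat.cast_nnratCast, Rat.coe_toNNRat q (mod_cast a.2.trans haq.le)]
  exact ⟨_, ⟨q.toNNRat, rfl⟩, NNReal.coe_lt_coe.1 (hcoe ▸ haq), NNReal.coe_lt_coe.1 (hcoe ▸ hqb)⟩

theorem AddMonoidHom.map_nnreal_eq_mul (G : ℝ≥0 →+ ℝ) (hG : Continuous G) (x : ℝ≥0) :
    G x = x * G 1 := by
  refine congr_fun (NNReal.denseRange_nnratCast.equalizer hG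
    (NNReal.continuous_coe.mul continuous_const) (funext fun q => ?_)) x
  have := map_nnratCast_smul G ℝ≥0 ℝ q 1
  rwa [smul_eq_mul, mul_one, smul_eq_mul] at this

theorem eq_mul_add_of_map_add_div_two {f : ℝ≥0 → ℝ} (hf : Continuous f)
    (hmid : ∀ x y, f ((x + y) / 2) = (f x + f y) / 2) (x : ℝ≥0) :
    f x = (f 1 - f 0) * x + f 0 := by
  let G : ℝ≥0 →+ ℝ :=
    { toFun := fun x => f x - f 0
      map_zero' := sub_self _
      map_add' := fun x y => by
        have hxy0 := hmid (x + y) 0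
        have hxy := hmid x y
        rw [add_zero] at hxy0
        linarith }
  have := G.map_nnreal_eq_mul (hf.sub continuous_const) x
  simp only [G, AddMonoidHom.coe_mk, ZeroHom.coe_mk] at this
  linarith

theorem map_add_div_two_of_add_eq_add {f : ℝ≥0 → ℝ} (hf : Continuous f)
    (hcancel : ∀ x y z, f x + f y = f z + f z → x + y = z + z) (x y : ℝ≥0) :
    f ((x + y) / 2) = (f x + f y) / 2 := by
  obtain ⟨z, hz⟩ : (f x + f y) / 2 ∈ range f := by
    rcases le_total (f x) (f y) with hxy | hxy
    · exact mem_range_of_exists_le_of_exists_ge hf ⟨x, by linarith⟩ ⟨y, by linarith⟩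
    · exact mem_range_of_exists_le_of_exists_ge hf ⟨y, by linarith⟩ ⟨x, by linarith⟩
  rw [hcancel x y z (by linarith), ← two_mul, mul_div_cancel_left₀ _ two_ne_zero, hz]

section AdditiveGeneratorPair

variable {h : ℝ≥0∞ → EReal} {g : EReal → ℝ≥0∞}

theorem apply_ne_bot_of_add_eq (hmono : Monotone h) (hg : ∀ u v, u + v = g (h u + h v))
    (x : ℝ≥0∞) : h x ≠ ⊥ := by
  have h0 : h 0 ≠ ⊥ := by
    -- otherwise `1 + 0` and `0 + 0` would both equal `g ⊥`
    intro h0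
    have h1 := hg 1 0
    have h2 := hg 0 0
    rw [h0, EReal.add_bot] at h1 h2
    simpa using h1.trans h2.symm
  exact fun hx => h0 (le_bot_iff.1 (hx ▸ hmono (zero_le (a := x))))

theorem coe_toReal_apply_coe (hmono : Monotone h) (htop : ∀ u, h u = ⊤ ↔ u = ⊤)
    (hg : ∀ u v, u + v = g (h u + h v)) (x : ℝ≥0) : ((h x).toReal : EReal) = h x :=
  EReal.coe_toReal (fun hx => ENNReal.coe_ne_top ((htop x).1 hx))
    (apply_ne_bot_of_add_eq hmono hg x)

theorem continuous_toReal_apply_coe (hcont : Continuous h) (hmono : Monotone h)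
    (htop : ∀ u, h u = ⊤ ↔ u = ⊤) (hg : ∀ u v, u + v = g (h u + h v)) :
    Continuous fun x : ℝ≥0 => (h x).toReal := by
  refine EReal.continuousOn_toReal.comp_continuous (hcont.comp ENNReal.continuous_coe) fun x => ?_
  simp only [mem_compl_iff, mem_insert_iff, mem_singleton_iff, not_or, htop]
  exact ⟨apply_ne_bot_of_add_eq hmono hg x, ENNReal.coe_ne_top⟩

theorem strictMono_toReal_apply_coe (hmono : Monotone h) (htop : ∀ u, h u = ⊤ ↔ u = ⊤)
    (hinj : InjOn h (Iio ⊤)) (hg : ∀ u v, u + v = g (h u + h v)) :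
    StrictMono fun x : ℝ≥0 => (h x).toReal := by
  refine Monotone.strictMono_of_injective (fun x y hxy => ?_) fun x y hxy => ?_
  · exact EReal.toReal_le_toReal (hmono (by exact_mod_cast hxy))
      (apply_ne_bot_of_add_eq hmono hg x) (fun hy => ENNReal.coe_ne_top ((htop y).1 hy))
  · refine ENNReal.coe_injective (hinj ENNReal.coe_lt_top ENNReal.coe_lt_top ?_)
    rw [← coe_toReal_apply_coe hmono htop hg x, ← coe_toReal_apply_coe hmono htop hg y]
    exact congrArg _ hxy

theorem add_eq_add_of_toReal_add_eq (hmono : Monotone h) (htop : ∀ u, h u = ⊤ ↔ u = ⊤)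
    (hg : ∀ u v, u + v = g (h u + h v)) {x y z : ℝ≥0}
    (hxyz : (h x).toReal + (h y).toReal = (h z).toReal + (h z).toReal) : x + y = z + z := by
  have hsum : h x + h y = h z + h z := by
    rw [← coe_toReal_apply_coe hmono htop hg x, ← coe_toReal_apply_coe hmono htop hg y,
      ← coe_toReal_apply_coe hmono htop hg z, ← EReal.coe_add, ← EReal.coe_add, hxyz]
  refine ENNReal.coe_injective ?_
  calc ((x + y : ℝ≥0) : ℝ≥0∞) = g (h x + h y) := hg x y
    _ = g (h z + h z) := by rw [hsum]
    _ = ((z + z : ℝ≥0) : ℝ≥0∞) := (hg z z).symm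

theorem eq_mul_add_of_coe (htop : ∀ u, h u = ⊤ ↔ u = ⊤) {k b : ℝ} (hk : 0 < k)
    (hcoe : ∀ x : ℝ≥0, h x = ((k * x + b : ℝ) : EReal)) (x : ℝ≥0∞) : h x = k * x + b := by
  induction x using ENNReal.recTopCoe with
  | top => rw [(htop ⊤).2 rfl, EReal.coe_ennreal_top, EReal.coe_mul_top_of_pos hk,
      EReal.top_add_of_ne_bot (EReal.coe_ne_bot b)]
  | coe x => rw [hcoe, EReal.coe_nnreal_eq_coe_real]; norm_cast

theorem apply_eq_sub_div_of_eq_mul_add {k b : ℝ} (hk : 0 < k)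
    (hh : ∀ x : ℝ≥0∞, h x = k * x + b) (hg : ∀ u v, u + v = g (h u + h v)) :
    ∀ x ∈ Ici (2 * h 0), (g x : EReal) = (x - ((2 * b : ℝ) : EReal)) / k := by
  have hb : h 0 = b := by simp [hh 0]
  have h2b : 2 * h 0 = ((2 * b : ℝ) : EReal) := by rw [hb]; norm_cast
  intro x hx
  rw [mem_Ici, h2b] at hx
  induction x using EReal.rec with
  | bot => exact absurd hx (not_le.2 (EReal.bot_lt_coe _))
  | top =>
    have htop : h ⊤ = ⊤ := by
      rw [hh, EReal.coe_ennreal_top, EReal.coe_mul_top_of_pos hk,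
        EReal.top_add_of_ne_bot (EReal.coe_ne_bot b)]
    have hgtop : g ⊤ = ⊤ := by simpa [htop, hb] using (hg ⊤ 0).symm
    rw [hgtop, EReal.coe_ennreal_top, EReal.top_sub_coe,
      EReal.top_div_of_pos_ne_top (by exact_mod_cast hk) (EReal.coe_ne_top k)]
  | coe r =>
    have hr : 2 * b ≤ r := EReal.coe_le_coe_iff.1 hx
    set t : ℝ≥0 := ⟨(r - 2 * b) / k, div_nonneg (by linarith) hk.le⟩
    have hsum : h t + h 0 = r := by
      rw [hh, hb, EReal.coe_nnreal_eq_coe_real]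
      norm_cast
      change k * ((r - 2 * b) / k) + b + b = r
      field_simp
      ring
    have hgr : g r = t := by simpa [hsum] using (hg t 0).symm
    rw [hgr, EReal.coe_nnreal_eq_coe_real, ← EReal.coe_sub, ← EReal.coe_div]
    rfl

end AdditiveGeneratorPair

/-- Functional-equation step: if `h : [0,+∞] → [-∞,+∞]` is continuous,
non-decreasing, `h(u) = +∞ ↔ u = +∞`, injective on `[0,+∞)`, and
`g : [2h(0),+∞] → [0,+∞]` satisfies `u + v = g(h(u) + h(v))` for all
`u,v ∈ [0,+∞]`, then `h(x) = kx + b` for some `k > 0`, `b ∈ ℝ`, and consequently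
`g(x) = (x - 2b)/k` on `[2h(0),+∞]`. -/
theorem stmt_17 (h : ℝ≥0∞ → EReal) (g : EReal → ℝ≥0∞)
    (hcont : Continuous h) (hmono : Monotone h)
    (htop : ∀ u : ℝ≥0∞, (h u = ⊤ ↔ u = ⊤))
    (hinj : InjOn h (Iio (⊤ : ℝ≥0∞)))
    (hg : ∀ u v : ℝ≥0∞, u + v = g (h u + h v)) :
    ∃ k b : ℝ, 0 < k ∧
      (∀ x : ℝ≥0∞, h x = (k : EReal) * (x : EReal) + (b : EReal)) ∧
      (∀ x ∈ Ici (2 * h 0), (g x : EReal) = (x - ((2 * b : ℝ) : EReal)) / (k : EReal)) := by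
  set f : ℝ≥0 → ℝ := fun x => (h x).toReal
  have hf_cont : Continuous f := continuous_toReal_apply_coe hcont hmono htop hg
  have hf_affine : ∀ x, f x = (f 1 - f 0) * x + f 0 :=
    eq_mul_add_of_map_add_div_two hf_cont <| map_add_div_two_of_add_eq_add hf_cont
      fun _ _ _ => add_eq_add_of_toReal_add_eq hmono htop hg
  have hk : 0 < f 1 - f 0 := sub_pos.2 (strictMono_toReal_apply_coe hmono htop hinj hg one_pos)
  have hh := eq_mul_add_of_coe htop hk fun x => by
    rw [← hf_affine, ← coe_toReal_apply_coe hmono htop hg]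
  exact ⟨_, _, hk, hh, apply_eq_sub_div_of_eq_mul_add hk hh hg⟩
end
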